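/- arXiv:2012.10104 — 2 statements merged into one kernel-verified Lean document; each statement's English description precedes it below -/
import Mathlib

section
/- Let V be a local operator system with cones {C_α^n} and Archimedean matrix order unit e, equipped with the seminorms ‖X‖_α^n = inf { r ≥ 0 : [[r·e_n, X],[X*, r·e_n]] ∈ C_α^{2n} }. Then for each α and n, the cone C_α^n is a closed subset of M_n(V) in the locally convex topology generated by the family of seminorms {‖·‖_β^n : β ∈ Γ}. -/
open scoped ComplexOrder

noncomputable section

variable {V : Type} [AddCommGroup V] [Module ℂ V]

/-- Conjugation `Xᴴ A X` of a `V`-valued matrix by a scalar matrix `X`. -/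
def sconj {n m : ℕ} (X : Matrix (Fin n) (Fin m) ℂ)
    (A : Matrix (Fin n) (Fin n) V) : Matrix (Fin m) (Fin m) V :=
  Matrix.of fun i j => ∑ p, ∑ q, ((starRingEnd ℂ) (X p i) * X q j) • A p q

/-- A (not necessarily proper) cone in a complex vector space. -/
def IsVCone {M : Type} [AddCommGroup M] [Module ℂ M] (C : Set M) : Prop :=
  (0 : M) ∈ C ∧ (∀ x ∈ C, ∀ y ∈ C, x + y ∈ C) ∧
    ∀ r : ℝ, 0 ≤ r → ∀ x ∈ C, (r : ℂ) • x ∈ C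

/-- A 2×2 block matrix of `n × n` blocks, reindexed to `Fin (n+n)`. -/
def blk {n : ℕ} (A B C D : Matrix (Fin n) (Fin n) V) :
    Matrix (Fin (n + n)) (Fin (n + n)) V :=
  Matrix.reindex finSumFinEquiv finSumFinEquiv (Matrix.fromBlocks A B C D)

/-- The diagonal matrix `diag (e, …, e)`. -/
def diagE (e : V) (n : ℕ) : Matrix (Fin n) (Fin n) V :=
  Matrix.diagonal fun _ => e

variable [StarAddMonoid V] [StarModule ℂ V]

/-- The seminorm at level `(α, n)` induced by the matrix cones `C` and the unit `e`:
`‖X‖_α^n = inf { r ≥ 0 : [[r eₙ, X],[X*, r eₙ]] ∈ C_α^{2n} }`. -/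
def nrm {Γ : Type} (C : Γ → (k : ℕ) → Set (Matrix (Fin k) (Fin k) V)) (e : V)
    (α : Γ) (n : ℕ) (X : Matrix (Fin n) (Fin n) V) : ℝ :=
  sInf {r : ℝ | 0 ≤ r ∧
    blk ((r : ℂ) • diagE e n) X (star X) ((r : ℂ) • diagE e n) ∈ C α (n + n)}

/-- A local matrix *-ordering on `V`: a downward filtered family of compatible matrix
cones of hermitian matrices whose total intersection with their negatives is trivial. -/
structure LMOrder (Γ : Type) (V : Type) [AddCommGroup V] [Module ℂ V]
    [StarAddMonoid V] [StarModule ℂ V] where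
  C : Γ → (n : ℕ) → Set (Matrix (Fin n) (Fin n) V)
  cone : ∀ α n, IsVCone (C α n)
  herm : ∀ α n, ∀ A ∈ C α n, star A = A
  filtered : ∀ α β : Γ, ∃ γ, ∀ n, C γ n ⊆ C α n ∩ C β n
  proper : ∀ n (A : Matrix (Fin n) (Fin n) V), (∀ α, A ∈ C α n ∧ -A ∈ C α n) → A = 0
  compat : ∀ (α : Γ) (n m : ℕ) (X : Matrix (Fin n) (Fin m) ℂ),
    ∀ A ∈ C α n, sconj X A ∈ C α m

/-- An abstract local operator system: a local matrix *-ordering together with an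
Archimedean matrix order unit. -/
structure LocalOpSys (Γ : Type) (V : Type) [AddCommGroup V] [Module ℂ V]
    [StarAddMonoid V] [StarModule ℂ V] extends LMOrder Γ V where
  e : V
  eherm : star e = e
  unit : ∀ (α : Γ) (n : ℕ) (A : Matrix (Fin n) (Fin n) V), star A = A →
    ∃ r : ℝ, 0 < r ∧ (r : ℂ) • diagE e n - A ∈ C α n
  arch : ∀ (α : Γ) (n : ℕ) (A : Matrix (Fin n) (Fin n) V),
    (∀ r : ℝ, 0 < r → (r : ℂ) • diagE e n + A ∈ C α n) → A ∈ C α n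

/-- An Archimedean local order unit space (`A.L.O.U.` space): ground-level cones only. -/
structure ALOU (Γ : Type) (V : Type) [AddCommGroup V] [Module ℂ V]
    [StarAddMonoid V] [StarModule ℂ V] where
  pos : Γ → Set V
  cone : ∀ α, IsVCone (pos α)
  herm : ∀ α, ∀ v ∈ pos α, star v = v
  filtered : ∀ α β : Γ, ∃ γ, pos γ ⊆ pos α ∩ pos β
  proper : ∀ v : V, (∀ α, v ∈ pos α ∧ -v ∈ pos α) → v = 0
  e : V
  eherm : star e = e
  unit : ∀ (α : Γ) (v : V), star v = v → ∃ r : ℝ, 0 < r ∧ (r : ℂ) • e - v ∈ pos α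
  arch : ∀ (α : Γ) (v : V), (∀ r : ℝ, 0 < r → (r : ℂ) • e + v ∈ pos α) → v ∈ pos α

/-- The minimal matrix cones over a family of ground-level cones. -/
def Cmin {Γ : Type} (pos : Γ → Set V) (α : Γ) (n : ℕ) :
    Set (Matrix (Fin n) (Fin n) V) :=
  {A | ∀ L : Fin n → ℂ, (∑ i, ∑ j, ((starRingEnd ℂ) (L i) * L j) • A i j) ∈ pos α}

/-- The maximal matrix cones over a family of ground-level cones:
sums `Σ aᵢ ⊗ vᵢ` with `aᵢ` positive semidefinite scalar matrices and `vᵢ` positive. -/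
def Dmax {Γ : Type} (pos : Γ → Set V) (α : Γ) (n : ℕ) :
    Set (Matrix (Fin n) (Fin n) V) :=
  {A | ∃ (k : ℕ) (a : Fin k → Matrix (Fin n) (Fin n) ℂ) (v : Fin k → V),
    (∀ i, (a i).PosSemidef) ∧ (∀ i, v i ∈ pos α) ∧
    A = Matrix.of fun p q => ∑ i, (a i p q) • v i}

/-- The amplification `φ⁽ᵏ⁾` of a matrix-valued linear map, realized on the index
type `Fin k × ι`. -/
def ampP {S : Type} [AddCommGroup S] [Module ℂ S] {k : ℕ} {ι : Type} [Fintype ι]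
    (φ : S →ₗ[ℂ] Matrix ι ι ℂ) (M : Matrix (Fin k) (Fin k) S) :
    Matrix (Fin k × ι) (Fin k × ι) ℂ :=
  Matrix.of fun ip jq => φ (M ip.1 jq.1) ip.2 jq.2

end

/-!
If `‖A - B‖_γ < r / 2` with `B ∈ C_α^n`, compressing the positive block matrix
`[[s e, A - B], [(A - B)*, s e]]` (`s < r / 2`) by the column `[1; c]`, `|c| = 1`, gives
`r e + c (A - B) + c̄ (A - B)* ∈ C_γ^n`. For `c = ±i` the hermitian `B` drops out, so the
Archimedean property gives `±i (A - A*) ∈ C_γ^n` for every `γ`, and `A = A*` by properness.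
For `c = 1` and `γ = α`, adding `2B ∈ C_α^n` gives `r e + 2A ∈ C_α^n` for all `r > 0`,
hence `A ∈ C_α^n`.
-/

section BlockMatrices

variable {V : Type} [AddCommGroup V]

lemma blk_add {n : ℕ} (A B C D A' B' C' D' : Matrix (Fin n) (Fin n) V) :
    blk A B C D + blk A' B' C' D' = blk (A + A') (B + B') (C + C') (D + D') := by
  rw [blk, blk, blk, ← Matrix.fromBlocks_add]
  rfl

lemma diagE_add (e : V) (n : ℕ) :
    diagE e (n + n) = blk (diagE e n) 0 0 (diagE e n) := by
  simp only [blk, diagE, Matrix.fromBlocks_diagonal, Matrix.reindex_apply,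
    Matrix.submatrix_diagonal_equiv, Sum.elim_lam_const_lam_const]
  rfl

lemma star_blk [StarAddMonoid V] {n : ℕ} (A B C D : Matrix (Fin n) (Fin n) V) :
    star (blk A B C D) = blk (star A) (star C) (star B) (star D) := by
  simp only [blk, Matrix.star_eq_conjTranspose, Matrix.reindex_apply,
    Matrix.conjTranspose_submatrix, Matrix.fromBlocks_conjTranspose]

variable [Module ℂ V]

lemma smul_blk {n : ℕ} (c : ℂ) (A B C D : Matrix (Fin n) (Fin n) V) :
    c • blk A B C D = blk (c • A) (c • B) (c • C) (c • D) := by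
  rw [blk, blk, ← Matrix.fromBlocks_smul]
  rfl

def colOneSmul (n : ℕ) (c : ℂ) : Matrix (Fin (n + n)) (Fin n) ℂ :=
  Matrix.reindex finSumFinEquiv (Equiv.refl _) (Matrix.fromRows 1 (c • 1))

lemma sconj_colOneSmul_blk {n : ℕ} (c : ℂ) (P Q R S : Matrix (Fin n) (Fin n) V) :
    sconj (colOneSmul n c) (blk P Q R S) =
      P + c • Q + (starRingEnd ℂ c) • R + (starRingEnd ℂ c * c) • S := by
  ext i j
  simp only [sconj, colOneSmul, blk, Matrix.of_apply, Matrix.reindex_apply,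
    Matrix.submatrix_apply, ← finSumFinEquiv.sum_comp, Equiv.symm_apply_apply,
    Fintype.sum_sum_type, Matrix.fromRows_apply_inl, Matrix.fromRows_apply_inr,
    Matrix.fromBlocks_apply₁₁, Matrix.fromBlocks_apply₁₂, Matrix.fromBlocks_apply₂₁,
    Matrix.fromBlocks_apply₂₂, Equiv.refl_symm, Equiv.refl_apply]
  simp [Matrix.one_apply, apply_ite (starRingEnd ℂ), ite_mul, mul_ite, ite_smul,
    Finset.sum_add_distrib, add_assoc]

end BlockMatrices

namespace LocalOpSys

variable {Γ V : Type} [AddCommGroup V] [Module ℂ V] [StarAddMonoid V] [StarModule ℂ V]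
  (S : LocalOpSys Γ V)

lemma add_mem {α : Γ} {n : ℕ} {A B : Matrix (Fin n) (Fin n) V} (hA : A ∈ S.C α n)
    (hB : B ∈ S.C α n) : A + B ∈ S.C α n :=
  (S.cone α n).2.1 A hA B hB

lemma smul_mem {α : Γ} {n : ℕ} {A : Matrix (Fin n) (Fin n) V} {r : ℝ} (hr : 0 ≤ r)
    (hA : A ∈ S.C α n) : (r : ℂ) • A ∈ S.C α n :=
  (S.cone α n).2.2 r hr A hA

lemma diagE_mem (α : Γ) (n : ℕ) : diagE S.e n ∈ S.C α n := by
  obtain ⟨r, hr, h⟩ := S.unit α n 0 (star_zero _)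
  have h' := S.smul_mem (inv_nonneg.mpr hr.le) (sub_zero ((r : ℂ) • diagE S.e n) ▸ h)
  rwa [smul_smul, ← Complex.ofReal_mul, inv_mul_cancel₀ hr.ne', Complex.ofReal_one,
    one_smul] at h'

lemma smul_diagE_mem (α : Γ) (n : ℕ) {r : ℝ} (hr : 0 ≤ r) :
    (r : ℂ) • diagE S.e n ∈ S.C α n :=
  S.smul_mem hr (S.diagE_mem α n)

lemma exists_blk_mem (α : Γ) (n : ℕ) (M : Matrix (Fin n) (Fin n) V) :
    ∃ r : ℝ, 0 ≤ r ∧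
      blk ((r : ℂ) • diagE S.e n) M (star M) ((r : ℂ) • diagE S.e n) ∈ S.C α (n + n) := by
  have hherm : star (-blk 0 M (star M) 0) = -blk 0 M (star M) 0 := by
    simp [star_blk]
  obtain ⟨r, hr, h⟩ := S.unit α (n + n) _ hherm
  refine ⟨r, hr.le, ?_⟩
  rw [sub_neg_eq_add, diagE_add, smul_blk, blk_add] at h
  simpa using h

lemma exists_blk_mem_of_nrm_lt {α : Γ} {n : ℕ} {M : Matrix (Fin n) (Fin n) V} {ε : ℝ}
    (h : nrm S.C S.e α n M < ε) :
    ∃ s : ℝ, 0 ≤ s ∧ s < ε ∧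
      blk ((s : ℂ) • diagE S.e n) M (star M) ((s : ℂ) • diagE S.e n) ∈ S.C α (n + n) := by
  obtain ⟨s, ⟨hs, hmem⟩, hlt⟩ :=
    (csInf_lt_iff ⟨0, fun _ hr => hr.1⟩ (S.exists_blk_mem α n M)).mp h
  exact ⟨s, hs, hlt, hmem⟩

lemma smul_diagE_add_mem_of_nrm_lt {α : Γ} {n : ℕ} {M : Matrix (Fin n) (Fin n) V} {r : ℝ}
    (h : nrm S.C S.e α n M < r / 2) {c : ℂ} (hc : starRingEnd ℂ c * c = 1) :
    (r : ℂ) • diagE S.e n + (c • M + starRingEnd ℂ c • star M) ∈ S.C α n := by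
  obtain ⟨s, hs, hsr, hblk⟩ := S.exists_blk_mem_of_nrm_lt h
  have hcompr := S.compat α (n + n) n (colOneSmul n c) _ hblk
  rw [sconj_colOneSmul_blk, hc, one_smul] at hcompr
  have hrest := S.smul_diagE_mem α n (r := r - 2 * s) (by linarith)
  convert S.add_mem hcompr hrest using 1
  push_cast
  module

lemma exists_mem_smul_diagE_add_mem {α γ : Γ} {n : ℕ} {A : Matrix (Fin n) (Fin n) V}
    (hA : ∀ ε > 0, ∃ B ∈ S.C α n, nrm S.C S.e γ n (A - B) < ε)
    {c : ℂ} (hc : starRingEnd ℂ c * c = 1) {r : ℝ} (hr : 0 < r) :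
    ∃ B ∈ S.C α n,
      (r : ℂ) • diagE S.e n + (c • (A - B) + starRingEnd ℂ c • star (A - B)) ∈ S.C γ n := by
  obtain ⟨B, hB, hAB⟩ := hA (r / 2) (by positivity)
  exact ⟨B, hB, S.smul_diagE_add_mem_of_nrm_lt hAB hc⟩

lemma smul_add_smul_star_mem_of_approx {α γ : Γ} {n : ℕ} {A : Matrix (Fin n) (Fin n) V}
    (hA : ∀ ε > 0, ∃ B ∈ S.C α n, nrm S.C S.e γ n (A - B) < ε)
    {c : ℂ} (hc : starRingEnd ℂ c * c = 1) (hc' : starRingEnd ℂ c = -c) :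
    c • A + starRingEnd ℂ c • star A ∈ S.C γ n := by
  refine S.arch γ n _ fun r hr => ?_
  obtain ⟨B, hB, hmem⟩ := S.exists_mem_smul_diagE_add_mem hA hc hr
  convert hmem using 2
  rw [star_sub, S.herm α n B hB, hc']
  module

lemma star_eq_of_approx {α : Γ} {n : ℕ} {A : Matrix (Fin n) (Fin n) V}
    (hA : ∀ γ, ∀ ε > 0, ∃ B ∈ S.C α n, nrm S.C S.e γ n (A - B) < ε) :
    star A = A := by
  have hpos γ : Complex.I • (A - star A) ∈ S.C γ n := by
    convert S.smul_add_smul_star_mem_of_approx (hA γ) (c := Complex.I)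
      (by simp) Complex.conj_I using 1
    rw [Complex.conj_I]
    module
  have hneg γ : -(Complex.I • (A - star A)) ∈ S.C γ n := by
    convert S.smul_add_smul_star_mem_of_approx (hA γ) (c := -Complex.I)
      (by simp) (by simp) using 1
    rw [map_neg, Complex.conj_I]
    module
  have hzero := S.proper n _ fun γ => ⟨hpos γ, hneg γ⟩
  exact (sub_eq_zero.mp ((smul_eq_zero.mp hzero).resolve_left Complex.I_ne_zero)).symm

end LocalOpSys

/-- each cone `C_α^n` is closed in the locally convex topology generated
by the family of cone-induced seminorms (closure expressed via the canonical
neighbourhood basis of finite intersections of seminorm balls). -/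
theorem statement1 {Γ V : Type} [AddCommGroup V] [Module ℂ V] [StarAddMonoid V]
    [StarModule ℂ V] (S : LocalOpSys Γ V) (α : Γ) (n : ℕ)
    (A : Matrix (Fin n) (Fin n) V)
    (hA : ∀ ε : ℝ, 0 < ε → ∀ F : Finset Γ,
      ∃ B ∈ S.C α n, ∀ β ∈ F, nrm S.C S.e β n (A - B) < ε) :
    A ∈ S.C α n := by
  have hApprox : ∀ γ, ∀ ε > 0, ∃ B ∈ S.C α n, nrm S.C S.e γ n (A - B) < ε := fun γ ε hε => by
    simpa using hA ε hε {γ}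
  have hAh : star A = A := S.star_eq_of_approx hApprox
  refine S.arch α n A fun r hr => ?_
  obtain ⟨B, hB, hmem⟩ :=
    S.exists_mem_smul_diagE_add_mem (hApprox α) (c := 1) (by simp) (r := 2 * r) (by positivity)
  have hsplit : (r : ℂ) • diagE S.e n + A =
      ((1 / 2 : ℝ) : ℂ) • (((2 * r : ℝ) : ℂ) • diagE S.e n +
        ((1 : ℂ) • (A - B) + starRingEnd ℂ 1 • star (A - B))) + B := by
    rw [star_sub, hAh, S.herm α n B hB, map_one]
    push_cast
    module
  rw [hsplit]
  exact S.add_mem (S.smul_mem (by norm_num) hmem) hB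
end

section
/- Let A be a unital Pro-C*-algebra, S ⊆ A a local operator system, and φ : S → M_n(ℂ) a local completely positive map. Then there exists a local completely positive map ψ : A → M_n(ℂ) extending φ (a local Arveson extension theorem for matrix-valued maps). -/
open scoped ComplexOrder

/-!
Sending `φ` to the functional `s_φ (v) = ∑ φ(v_ij)_ij` on `M_n(S)` turns local complete
positivity of `φ` into positivity of `s_φ` on the cone `C_α^n`. Conversely, a functional `s` on
`M_n(A)` defines `ψ(a) = (s (E_pq ⊗ a))_pq`, and `⟨x, ψ⁽ᵏ⁾(M) x⟩ = s (X* M X)`, so positivity of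
`s` on `C_α^n` makes `ψ` completely positive at level `α` by compatibility of the cones. It
therefore suffices to extend `s_φ` positively from `M_n(S)` to `M_n(A)`. As `M_n(S)` contains the
order unit `diag (1, …, 1)`, this is Krein's extension theorem, which follows from Riesz's real
extension theorem applied to `Re s_φ` and the real cone `{w | w + w* ∈ C_α^n}`.
-/

open Matrix

theorem Matrix.posSemidef_of_forall_dotProduct_mulVec_nonneg {n : Type*} [Fintype n]
    {P : Matrix n n ℂ} (h : ∀ x, 0 ≤ star x ⬝ᵥ (P *ᵥ x)) : P.PosSemidef := by
  classical
  rw [← isPositive_toEuclideanLin_iff, LinearMap.isPositive_iff_complex]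
  intro x
  have hinner : inner ℂ (P.toEuclideanLin x) x = star (star x.ofLp ⬝ᵥ (P *ᵥ x.ofLp)) := by
    rw [EuclideanSpace.inner_eq_star_dotProduct, dotProduct_star, dotProduct_comm]
    rfl
  obtain ⟨hre, him⟩ := Complex.nonneg_iff.1 (h x.ofLp)
  rw [hinner]
  exact ⟨Complex.ext (by simp) (by simp [← him]), by simpa using hre⟩

section KreinExtension

variable {W : Type} [AddCommGroup W] [Module ℂ W] {K : Set W}

lemma IsVCone.mem_of_real_smul_mem (hK : IsVCone K) {r : ℝ} (hr : 0 < r) {w : W}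
    (h : (r : ℂ) • w ∈ K) : w ∈ K := by
  have h' := hK.2.2 r⁻¹ (inv_nonneg.2 hr.le) _ h
  rwa [smul_smul, ← Complex.ofReal_mul, inv_mul_cancel₀ hr.ne', Complex.ofReal_one,
    one_smul] at h'

variable [StarAddMonoid W] [StarModule ℂ W]

/-- Riesz's extension theorem needs a cone in a real vector space: pull `K` back along
`w ↦ w + star w`. A functional nonnegative on this cone vanishes on skew-adjoint elements. -/
def hermitianPartCone (hK : IsVCone K) : PointedCone ℝ W where
  carrier := {w | w + star w ∈ K}
  add_mem' {v w} hv hw := by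
    change v + w + star (v + w) ∈ K
    rw [star_add, add_add_add_comm]
    exact hK.2.1 _ hv _ hw
  zero_mem' := by simpa using hK.1
  smul_mem' c w hw := by
    change (c : ℝ) • w + star ((c : ℝ) • w) ∈ K
    rw [← Complex.coe_smul, star_smul, Complex.star_def, Complex.conj_ofReal, ← smul_add]
    exact hK.2.2 c c.2 _ hw

lemma mem_hermitianPartCone (hK : IsVCone K) {w : W} :
    w ∈ hermitianPartCone hK ↔ w + star w ∈ K := Iff.rfl

lemma Module.Dual.extendRCLike_nonneg_of_nonneg_hermitianPartCone (hK : IsVCone K)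
    (hK_herm : ∀ w ∈ K, star w = w) (g : Module.Dual ℝ W)
    (hg : ∀ w ∈ hermitianPartCone hK, 0 ≤ g w) {w : W} (hw : w ∈ K) :
    0 ≤ (g.extendRCLike w : ℂ) := by
  have hw_herm := hK_herm w hw
  have hskew : Complex.I • w + star (Complex.I • w) = 0 := by
    rw [star_smul, hw_herm, Complex.star_def, Complex.conj_I, neg_smul, add_neg_cancel]
  have hIw : g (Complex.I • w) = 0 := by
    have h₁ := hg (Complex.I • w) ((mem_hermitianPartCone hK).2 (hskew ▸ hK.1))
    have h₂ := hg (-(Complex.I • w)) (by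
      rw [mem_hermitianPartCone, star_neg, ← neg_add, hskew, neg_zero]
      exact hK.1)
    rw [map_neg] at h₂
    linarith
  have hgw : 0 ≤ g w := hg w (by
    rw [mem_hermitianPartCone, hw_herm, ← two_smul ℝ w, ← Complex.coe_smul]
    exact hK.2.2 2 zero_le_two w hw)
  rw [Complex.nonneg_iff, ← RCLike.re_to_complex, ← RCLike.im_to_complex,
    re_extendRCLike_apply, im_extendRCLike_apply]
  simp [hIw, hgw]

namespace LinearPMap

variable (f : W →ₗ.[ℂ] ℂ) (hK : IsVCone K)
  (hf : ∀ x : f.domain, (x : W) ∈ K → 0 ≤ f x) (e : f.domain)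
  (he : ∀ w, star w = w → ∃ r : ℝ, 0 < r ∧ (r : ℂ) • (e : W) - w ∈ K)
include hK hf he

omit [StarModule ℂ W] in
lemma im_eq_zero_of_nonneg_of_orderUnit (x : f.domain) (hx : star (x : W) = x) :
    (f x).im = 0 := by
  obtain ⟨r, -, hr⟩ := he x hx
  obtain ⟨r₀, hr₀, he₀⟩ := he 0 (star_zero _)
  have hre : (f ((r : ℂ) • e - x)).im = 0 := (Complex.nonneg_iff.1 (hf _ hr)).2.symm
  have hfe : (f e).im = 0 :=
    (Complex.nonneg_iff.1 (hf e (hK.mem_of_real_smul_mem hr₀ (by simpa using he₀)))).2.symm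
  rw [f.map_sub, f.map_smul, smul_eq_mul, Complex.sub_im, Complex.im_ofReal_mul, hfe] at hre
  linarith

lemma re_map_star_of_nonneg_of_orderUnit (x : f.domain) (hx : star (x : W) ∈ f.domain) :
    (f ⟨star (x : W), hx⟩).re = (f x).re := by
  have h := f.im_eq_zero_of_nonneg_of_orderUnit hK hf e he
    (Complex.I • (x - ⟨star (x : W), hx⟩)) (by simp [star_smul, smul_sub]; abel)
  simp only [f.map_smul, f.map_sub, smul_eq_mul, Complex.mul_im, Complex.I_re, Complex.I_im,
    Complex.sub_re] at h
  linarith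

/-- Krein's extension theorem. -/
theorem exists_extension_nonneg_of_orderUnit (hK_herm : ∀ w ∈ K, star w = w)
    (hstar : ∀ x ∈ f.domain, star x ∈ f.domain) :
    ∃ F : W →ₗ[ℂ] ℂ, (∀ x : f.domain, F x = f x) ∧ ∀ w ∈ K, 0 ≤ F w := by
  have he_herm : star (e : W) = e := by
    obtain ⟨r, hr, h⟩ := he 0 (star_zero _)
    exact hK_herm _ (hK.mem_of_real_smul_mem hr (by simpa using h))
  let fℝ : W →ₗ.[ℝ] ℝ :=
    ⟨f.domain.restrictScalars ℝ, Complex.reLm ∘ₗ f.toFun.restrictScalars ℝ⟩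
  have hfℝ (x : f.domain) : fℝ x = (f x).re := rfl
  have nonneg : ∀ x : fℝ.domain, (x : W) ∈ hermitianPartCone hK → 0 ≤ fℝ x := by
    rintro ⟨x, hx⟩ (hxK : x + star x ∈ K)
    have h := (Complex.nonneg_iff.1 (hf (⟨x, hx⟩ + ⟨star x, hstar x hx⟩) hxK)).1
    rw [f.map_add, Complex.add_re,
      f.re_map_star_of_nonneg_of_orderUnit hK hf e he ⟨x, hx⟩ (hstar x hx)] at h
    change 0 ≤ (f ⟨x, hx⟩).re
    linarith
  have dense : ∀ y, ∃ x : fℝ.domain, (x : W) + y ∈ hermitianPartCone hK := by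
    intro y
    obtain ⟨r, -, hr⟩ := he (-(y + star y)) (by simp [add_comm])
    refine ⟨((r / 2 : ℝ) : ℂ) • e, ?_⟩
    change (((r / 2 : ℝ) : ℂ) • (e : W) + y) + star (((r / 2 : ℝ) : ℂ) • (e : W) + y) ∈ K
    convert hr using 1
    rw [star_add, star_smul, he_herm, Complex.star_def, Complex.conj_ofReal, sub_neg_eq_add,
      show (r : ℂ) = ((r / 2 : ℝ) : ℂ) + ((r / 2 : ℝ) : ℂ) by push_cast; ring, add_smul]
    abel
  obtain ⟨g, hgf, hg⟩ := riesz_extension (hermitianPartCone hK) fℝ nonneg dense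
  refine ⟨Module.Dual.extendRCLike g, fun x => Complex.ext ?_ ?_,
    fun w hw =>
      Module.Dual.extendRCLike_nonneg_of_nonneg_hermitianPartCone hK hK_herm g hg hw⟩
  · exact (Module.Dual.re_extendRCLike_apply (𝕜 := ℂ) g x).trans (hgf x)
  · have h := hgf (Complex.I • x)
    rw [hfℝ, f.map_smul, smul_eq_mul, Complex.mul_re, Complex.I_re, Complex.I_im] at h
    rw [← RCLike.im_to_complex, Module.Dual.im_extendRCLike_apply]
    change -g ((Complex.I • x : f.domain) : W) = _
    rw [h]
    ring

end LinearPMap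

end KreinExtension

section MatrixFunctional

variable {V : Type} [AddCommGroup V] [Module ℂ V] {ι : Type}

/-- The functional `s_φ` of the paper, without its normalizing factor `1 / n`. -/
def LinearMap.matrixFunctional [Fintype ι] (φ : V →ₗ[ℂ] Matrix ι ι ℂ) :
    Matrix ι ι V →ₗ[ℂ] ℂ :=
  ∑ i, ∑ j, entryLinearMap ℂ ℂ i j ∘ₗ φ ∘ₗ entryLinearMap ℂ V i j

@[simp]
lemma LinearMap.matrixFunctional_apply [Fintype ι] (φ : V →ₗ[ℂ] Matrix ι ι ℂ)
    (M : Matrix ι ι V) : φ.matrixFunctional M = ∑ i, ∑ j, φ (M i j) i j := by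
  simp [LinearMap.matrixFunctional]

def LinearMap.ofMatrixFunctional [DecidableEq ι] (F : Matrix ι ι V →ₗ[ℂ] ℂ) :
    V →ₗ[ℂ] Matrix ι ι ℂ where
  toFun v := of fun p q => F (Matrix.single p q v)
  map_add' v w := by ext; simp [Matrix.single_add]
  map_smul' c v := by ext; simp [← Matrix.smul_single]

@[simp]
lemma LinearMap.ofMatrixFunctional_apply [DecidableEq ι] (F : Matrix ι ι V →ₗ[ℂ] ℂ) (v : V)
    (p q : ι) : F.ofMatrixFunctional v p q = F (Matrix.single p q v) := rfl

@[simp]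
lemma LinearMap.ofMatrixFunctional_matrixFunctional [Fintype ι] [DecidableEq ι]
    (φ : V →ₗ[ℂ] Matrix ι ι ℂ) : φ.matrixFunctional.ofMatrixFunctional = φ := by
  ext v p q
  rw [ofMatrixFunctional_apply, matrixFunctional_apply,
    Fintype.sum_eq_single p fun i hi => by simp [single_apply_of_row_ne (Ne.symm hi)],
    Fintype.sum_eq_single q fun j hj => by simp [single_apply_of_col_ne _ _ (Ne.symm hj)],
    single_apply_same]

lemma LinearMap.ofMatrixFunctional_comp_mapMatrix [DecidableEq ι] {U : Type} [AddCommGroup U]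
    [Module ℂ U] (F : Matrix ι ι V →ₗ[ℂ] ℂ) (f : U →ₗ[ℂ] V) :
    (F ∘ₗ f.mapMatrix).ofMatrixFunctional = F.ofMatrixFunctional ∘ₗ f := by
  ext u p q
  simp [map_single]

lemma LinearMap.matrixFunctional_nonneg {n : ℕ} (φ : V →ₗ[ℂ] Matrix (Fin n) (Fin n) ℂ)
    {M : Matrix (Fin n) (Fin n) V} (hM : (ampP φ M).PosSemidef) :
    0 ≤ φ.matrixFunctional M := by
  have h := hM.dotProduct_mulVec_nonneg fun ip => if ip.1 = ip.2 then 1 else 0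
  simpa [dotProduct, mulVec, Fintype.sum_prod_type, ampP] using h

lemma dotProduct_ampP_ofMatrixFunctional {k n : ℕ} (F : Matrix (Fin n) (Fin n) V →ₗ[ℂ] ℂ)
    (M : Matrix (Fin k) (Fin k) V) (x : Fin k × Fin n → ℂ) :
    star x ⬝ᵥ (ampP F.ofMatrixFunctional M *ᵥ x) = F (sconj (of fun i p => x (i, p)) M) := by
  conv_rhs => rw [matrix_eq_sum_single (sconj _ M)]
  have hF (u v : Fin n) (a : V) : F (Matrix.single u v a) = (F ∘ₗ singleLinearMap ℂ u v) a :=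
    rfl
  simp only [map_sum, hF, sconj, of_apply, map_smul, smul_eq_mul]
  simp only [dotProduct, mulVec, Fintype.sum_prod_type, ampP, of_apply, Finset.mul_sum,
    LinearMap.ofMatrixFunctional_apply, Pi.star_apply, RCLike.star_def]
  rw [Finset.sum_comm]
  refine Finset.sum_congr rfl fun u _ => ?_
  rw [Finset.sum_congr rfl fun i _ => Finset.sum_comm, Finset.sum_comm]
  refine Finset.sum_congr rfl fun v _ => Finset.sum_congr rfl fun i _ =>
    Finset.sum_congr rfl fun j _ => ?_
  simp only [LinearMap.comp_apply, singleLinearMap_apply]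
  ring

end MatrixFunctional

section SubspaceMatrices

variable {V : Type} [AddCommGroup V] [Module ℂ V] {ι : Type} (S : Submodule ℂ V)

lemma Submodule.mapMatrix_subtype_injective :
    Function.Injective (S.subtype.mapMatrix : Matrix ι ι S →ₗ[ℂ] Matrix ι ι V) :=
  fun _ _ h => Matrix.ext fun i j => Subtype.ext (congr_fun (congr_fun h i) j)

noncomputable def LinearMap.matrixFunctionalPMap [Fintype ι] (φ : S →ₗ[ℂ] Matrix ι ι ℂ) :
    Matrix ι ι V →ₗ.[ℂ] ℂ :=
  ⟨LinearMap.range S.subtype.mapMatrix,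
    φ.matrixFunctional ∘ₗ
      (LinearEquiv.ofInjective _ S.mapMatrix_subtype_injective).symm.toLinearMap⟩

lemma LinearMap.matrixFunctionalPMap_apply [Fintype ι] (φ : S →ₗ[ℂ] Matrix ι ι ℂ)
    (M : Matrix ι ι S) (hM : S.subtype.mapMatrix M ∈ (φ.matrixFunctionalPMap S).domain) :
    φ.matrixFunctionalPMap S ⟨S.subtype.mapMatrix M, hM⟩ = φ.matrixFunctional M :=
  congr_arg φ.matrixFunctional ((LinearEquiv.ofInjective _ _).symm_apply_apply M)

lemma LinearMap.star_mem_matrixFunctionalPMap_domain [Fintype ι] [StarAddMonoid V]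
    (hS : ∀ v ∈ S, star v ∈ S) (φ : S →ₗ[ℂ] Matrix ι ι ℂ) {M : Matrix ι ι V}
    (hM : M ∈ (φ.matrixFunctionalPMap S).domain) :
    star M ∈ (φ.matrixFunctionalPMap S).domain := by
  obtain ⟨N, rfl⟩ := hM
  exact ⟨of fun i j => ⟨star (N j i : V), hS _ (N j i).2⟩, rfl⟩

lemma LinearMap.diagonal_mem_matrixFunctionalPMap_domain [Fintype ι] [DecidableEq ι]
    (φ : S →ₗ[ℂ] Matrix ι ι ℂ) {e : V} (he : e ∈ S) :
    diagonal (fun _ => e) ∈ (φ.matrixFunctionalPMap S).domain :=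
  ⟨diagonal fun _ => ⟨e, he⟩, diagonal_map rfl⟩

end SubspaceMatrices

/-- local Arveson extension for matrix-valued maps: a local completely
positive map `φ : S → M_n(ℂ)` on a local operator system inside a unital
Pro-C*-algebra `A` extends to a local completely positive map on all of `A`. -/
theorem statement15 {Γ A : Type} [Ring A] [Algebra ℂ A] [StarRing A] [StarModule ℂ A]
    (T : LocalOpSys Γ A) (hTe : T.e = 1)
    (S : Submodule ℂ A) (h1 : (1 : A) ∈ S) (hstar : ∀ a ∈ S, star a ∈ S)
    (n : ℕ) (φ : S →ₗ[ℂ] Matrix (Fin n) (Fin n) ℂ)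
    (hφ : ∃ α : Γ, ∀ (k : ℕ) (M : Matrix (Fin k) (Fin k) S),
      (M.map fun s => (s : A)) ∈ T.C α k → (ampP φ M).PosSemidef) :
    ∃ ψ : A →ₗ[ℂ] Matrix (Fin n) (Fin n) ℂ,
      (∀ s : S, ψ s = φ s) ∧
      ∃ α : Γ, ∀ (k : ℕ) (M : Matrix (Fin k) (Fin k) A),
        M ∈ T.C α k → (ampP ψ M).PosSemidef := by
  obtain ⟨α, hα⟩ := hφ
  have hf : ∀ x : (φ.matrixFunctionalPMap S).domain,
      (x : Matrix (Fin n) (Fin n) A) ∈ T.C α n → 0 ≤ φ.matrixFunctionalPMap S x := by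
    rintro ⟨M, hM⟩ hMK
    obtain ⟨N, rfl⟩ := id hM
    rw [φ.matrixFunctionalPMap_apply S N hM]
    exact φ.matrixFunctional_nonneg (hα n N hMK)
  obtain ⟨F, hFf, hFK⟩ := (φ.matrixFunctionalPMap S).exists_extension_nonneg_of_orderUnit
    (T.cone α n) hf ⟨diagE T.e n, hTe ▸ φ.diagonal_mem_matrixFunctionalPMap_domain S h1⟩
    (T.unit α n) (T.herm α n) fun _ => φ.star_mem_matrixFunctionalPMap_domain S hstar
  have hF : F ∘ₗ S.subtype.mapMatrix = φ.matrixFunctional := LinearMap.ext fun N =>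
    (hFf ⟨_, LinearMap.mem_range_self _ N⟩).trans (φ.matrixFunctionalPMap_apply S N _)
  refine ⟨F.ofMatrixFunctional, fun s => ?_, α, fun k M hM => ?_⟩
  · rw [← LinearMap.ofMatrixFunctional_matrixFunctional φ, ← hF,
      LinearMap.ofMatrixFunctional_comp_mapMatrix]
    rfl
  · refine posSemidef_of_forall_dotProduct_mulVec_nonneg fun x => ?_
    rw [dotProduct_ampP_ofMatrixFunctional]
    exact hFK _ (T.compat α k n _ M hM)
end
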